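/- Let C be an n×n invertible diagonal real matrix and V = σ²I with σ > 0, and let Σ ≻ 0 be symmetric. Define Σ̄ = (CᵀV⁻¹C + Σ⁻¹)⁻¹. If additionally Σ ⪰ W for a symmetric W ≻ 0, then ln det Σ̄ ≥ n·ln(σ_u²/(C_u² + σ_u²/λ_min(W))), where C_u²/σ_u² = λ_max(CᵀV⁻¹C). -/

import Mathlib

/-!
In the Loewner order, `Σ ⪰ W ⪰ λ_min(W) • 1` gives `Σ⁻¹ ⪯ λ_min(W)⁻¹ • 1`, and the diagonal term
`Cᵀ V⁻¹ C = diag(C_ii² / σ²)` is at most `(C_u² / σ²) • 1`. Hence every eigenvalue of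
`Σ̄⁻¹ = Cᵀ V⁻¹ C + Σ⁻¹` is at most `c = C_u² / σ² + 1 / λ_min(W)`, so `det Σ̄⁻¹ ≤ cⁿ`, i.e.
`log det Σ̄ ≥ n log c⁻¹`.
-/

open Matrix
open scoped MatrixOrder ComplexOrder

namespace Matrix

variable {n 𝕜 : Type*} [Fintype n] [DecidableEq n] [RCLike 𝕜]

theorem IsHermitian.le_algebraMap_iff_eigenvalues_le {A : Matrix n n 𝕜}
    (hA : A.IsHermitian) {r : ℝ} : A ≤ algebraMap ℝ _ r ↔ ∀ i, hA.eigenvalues i ≤ r := by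
  rw [le_algebraMap_iff_spectrum_le hA.isSelfAdjoint, hA.spectrum_real_eq_range_eigenvalues,
    Set.forall_mem_range]

theorem IsHermitian.algebraMap_le_iff_le_eigenvalues {A : Matrix n n 𝕜}
    (hA : A.IsHermitian) {r : ℝ} : algebraMap ℝ _ r ≤ A ↔ ∀ i, r ≤ hA.eigenvalues i := by
  rw [algebraMap_le_iff_le_spectrum hA.isSelfAdjoint, hA.spectrum_real_eq_range_eigenvalues,
    Set.forall_mem_range]

theorem IsHermitian.algebraMap_iInf_eigenvalues_le {A : Matrix n n 𝕜}
    (hA : A.IsHermitian) : algebraMap ℝ _ (⨅ i, hA.eigenvalues i) ≤ A :=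
  hA.algebraMap_le_iff_le_eigenvalues.2 fun i => ciInf_le (Set.finite_range _).bddBelow i

theorem PosDef.iInf_eigenvalues_pos [Nonempty n] {A : Matrix n n 𝕜}
    (hA : A.PosDef) : 0 < ⨅ i, hA.1.eigenvalues i := by
  obtain ⟨i, hi⟩ := exists_eq_ciInf_of_finite (f := hA.1.eigenvalues)
  exact hi ▸ hA.eigenvalues_pos i

theorem diagonal_le_algebraMap {d : n → ℝ} {r : ℝ} (h : ∀ i, d i ≤ r) :
    diagonal d ≤ algebraMap ℝ _ r := by
  rw [le_iff, algebraMap_eq_diagonal, diagonal_sub, posSemidef_diagonal_iff]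
  exact fun i => sub_nonneg.2 (h i)

theorem PosDef.inv_le_algebraMap_inv {A : Matrix n n 𝕜} (hA : A.PosDef)
    {r : ℝ} (hr : 0 < r) (h : algebraMap ℝ _ r ≤ A) : A⁻¹ ≤ algebraMap ℝ _ r⁻¹ := by
  have hspec := (algebraMap_le_iff_le_spectrum hA.1.isSelfAdjoint).1 h
  refine (le_algebraMap_iff_spectrum_le hA.inv.1.isSelfAdjoint).2 fun x hx => ?_
  lift A to (Matrix n n 𝕜)ˣ using hA.isUnit
  rw [← coe_units_inv, ← spectrum.inv₀_mem_iff] at hx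
  have hrx := hspec _ hx
  exact (le_inv_comm₀ hr (inv_pos.1 (hr.trans_le hrx))).1 hrx

theorem PosSemidef.det_le_pow_of_le_algebraMap {A : Matrix n n ℝ} (hA : A.PosSemidef) {r : ℝ}
    (h : A ≤ algebraMap ℝ _ r) : A.det ≤ r ^ Fintype.card n := by
  rw [hA.1.det_eq_prod_eigenvalues, ← Finset.card_univ, ← Finset.prod_const]
  exact Finset.prod_le_prod (fun i _ => by simpa using hA.eigenvalues_nonneg i)
    fun i _ => by simpa using hA.1.le_algebraMap_iff_eigenvalues_le.1 h i

theorem IsDiag.transpose_mul_smul_one_mul {α : Type*} [CommRing α] {C : Matrix n n α}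
    (hC : C.IsDiag) (k : α) :
    Cᵀ * (k • 1) * C = diagonal fun i => k * C i i ^ 2 := by
  rw [← hC.diagonal_diag, diagonal_transpose, smul_one_eq_diagonal, diagonal_mul_diagonal,
    diagonal_mul_diagonal]
  simp only [diag_apply, diagonal_apply_eq]
  congr 1
  funext i
  ring

theorem PosDef.card_mul_log_inv_le_log_det_inv {A : Matrix n n ℝ} (hA : A.PosDef) {r : ℝ}
    (h : A ≤ algebraMap ℝ _ r) : Fintype.card n * Real.log r⁻¹ ≤ Real.log A⁻¹.det := by
  rw [det_nonsing_inv, Ring.inverse_eq_inv', Real.log_inv, Real.log_inv, mul_neg, neg_le_neg_iff,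
    ← Real.log_pow]
  exact Real.log_le_log hA.det_pos (hA.posSemidef.det_le_pow_of_le_algebraMap h)

end Matrix

theorem stmt_17_general (n : ℕ) (hn : 0 < n) (C Sig W : Matrix (Fin n) (Fin n) ℝ) (σ : ℝ)
    (hσ : 0 < σ) (hCdiag : C.IsDiag)
    (hSig : Sig.PosDef) (hW : W.PosDef) (hSW : (Sig - W).PosSemidef) :
    n * Real.log (σ ^ 2 / ((⨆ i, (C i i) ^ 2) + σ ^ 2 / ⨅ i, hW.1.eigenvalues i))
      ≤ Real.log ((Cᵀ * (σ ^ 2 • (1 : Matrix (Fin n) (Fin n) ℝ))⁻¹ * C + Sig⁻¹)⁻¹).det := by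
  have : Nonempty (Fin n) := Fin.pos_iff_nonempty.mp hn
  set a := ⨅ i, hW.1.eigenvalues i
  set b := ⨆ i, C i i ^ 2
  have ha : 0 < a := hW.iInf_eigenvalues_pos
  have hσ2 : σ ^ 2 ≠ 0 := by positivity
  have hV : (σ ^ 2 • (1 : Matrix (Fin n) (Fin n) ℝ))⁻¹ = (σ ^ 2)⁻¹ • 1 :=
    inv_eq_right_inv (by rw [smul_mul_smul_comm, one_mul, mul_inv_cancel₀ hσ2, one_smul])
  have hdata : Cᵀ * (σ ^ 2 • 1)⁻¹ * C = diagonal fun i => (σ ^ 2)⁻¹ * C i i ^ 2 := by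
    rw [hV, hCdiag.transpose_mul_smul_one_mul]
  have hdata_le : Cᵀ * (σ ^ 2 • 1)⁻¹ * C ≤ algebraMap ℝ _ ((σ ^ 2)⁻¹ * b) :=
    hdata ▸ diagonal_le_algebraMap fun i => mul_le_mul_of_nonneg_left
      (le_ciSup (f := fun i => C i i ^ 2) (Set.finite_range _).bddAbove i) (by positivity)
  have hprior_le : Sig⁻¹ ≤ algebraMap ℝ _ a⁻¹ :=
    hSig.inv_le_algebraMap_inv ha (hW.1.algebraMap_iInf_eigenvalues_le.trans (le_iff.2 hSW))
  have hpost : (Cᵀ * (σ ^ 2 • 1)⁻¹ * C + Sig⁻¹).PosDef :=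
    hdata ▸ .posSemidef_add (.diagonal fun i => by positivity) hSig.inv
  have hlog := hpost.card_mul_log_inv_le_log_det_inv
    ((add_le_add hdata_le hprior_le).trans_eq (map_add _ _ _).symm)
  rw [Fintype.card_fin] at hlog
  convert hlog using 3
  field_simp

theorem stmt_17 (n : ℕ) (hn : 0 < n) (C Sig W : Matrix (Fin n) (Fin n) ℝ) (σ : ℝ)
    (hσ : 0 < σ) (hCdiag : C.IsDiag) (hC : IsUnit C.det)
    (hSig : Sig.PosDef) (hW : W.PosDef) (hSW : (Sig - W).PosSemidef) :
    n * Real.log (σ ^ 2 / ((⨆ i, (C i i) ^ 2) + σ ^ 2 / ⨅ i, hW.1.eigenvalues i))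
      ≤ Real.log ((Cᵀ * (σ ^ 2 • (1 : Matrix (Fin n) (Fin n) ℝ))⁻¹ * C + Sig⁻¹)⁻¹).det :=
  stmt_17_general n hn C Sig W σ hσ hCdiag hSig hW hSW
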